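/- arXiv:1706.09400 — 6 statements merged into one kernel-verified Lean document; each statement's English description precedes it below -/
import Mathlib

section
/- With B, k, S_γ, s_γ as above and U(w) := (S_γ − w̄I)(S_γ − wI)^{-1} the Cayley transform for nonreal w: s_γ(w̄)·k(z,w̄) = s_γ(w)·U(w)k(z,w) for all z ∈ ℂ. -/
open Complex

/-- `e^#(z) = conj (e (conj z))`. -/
noncomputable def eSharp (e : ℂ → ℂ) (z : ℂ) : ℂ :=
  (starRingEnd ℂ) (e ((starRingEnd ℂ) z))

/-- `s_γ(z) = (i/2)(e^{iγ} e(z) - e^{-iγ} e^#(z))`. -/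
noncomputable def sfun (e : ℂ → ℂ) (γ : ℝ) (z : ℂ) : ℂ :=
  I / 2 * (Complex.exp (I * γ) * e z - Complex.exp (-(I * (γ : ℂ))) * eSharp e z)

/-- The de Branges reproducing kernel
`k(z,w) = (e^#(z) e(w̄) - e(z) e^#(w̄)) / (2πi (z - w̄))`. -/
noncomputable def kfun (e : ℂ → ℂ) (z w : ℂ) : ℂ :=
  (eSharp e z * e ((starRingEnd ℂ) w) - e z * eSharp e ((starRingEnd ℂ) w)) /
    (2 * (Real.pi : ℂ) * I * (z - (starRingEnd ℂ) w))

/-- The action of the resolvent `(S_γ - wI)⁻¹` of the canonical selfadjoint extension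
`S_γ` of the multiplication operator:
`((S_γ - wI)⁻¹ f)(z) = (f(z) - (s_γ(z)/s_γ(w)) f(w)) / (z - w)`. -/
noncomputable def res (e : ℂ → ℂ) (γ : ℝ) (w : ℂ) (f : ℂ → ℂ) (z : ℂ) : ℂ :=
  (f z - sfun e γ z / sfun e γ w * f w) / (z - w)


/-! `s_γ` is a fixed linear combination of `e` and `e^#`, while the numerator `N(z, w)` of
`k(z, w)` is the determinant of the vectors `(e, e^#)` at `w̄` and `z`; the three-term relation
between such determinants gives `s_γ(w̄) N(z, w̄) = s_γ(w) N(z, w) - s_γ(z) N(w, w)`.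
Multiplying the claim by `z - w` and clearing the denominators `z - w̄` of the kernels turns it
into exactly this relation. -/

open ComplexConjugate

noncomputable def kernelNumerator (e : ℂ → ℂ) (z w : ℂ) : ℂ :=
  eSharp e z * e (conj w) - e z * eSharp e (conj w)

lemma kfun_eq_kernelNumerator_div (e : ℂ → ℂ) (z w : ℂ) :
    kfun e z w = kernelNumerator e z w / (2 * (Real.pi : ℂ) * I * (z - conj w)) :=
  rfl

/-- The factor `z - w̄` cancels even at `z = w̄`, where `kfun` takes the junk value `0`,
because the numerator vanishes there too. -/
lemma sub_conj_mul_kfun (e : ℂ → ℂ) (z w : ℂ) :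
    (z - conj w) * kfun e z w = kernelNumerator e z w / (2 * (Real.pi : ℂ) * I) := by
  have hD : (2 * (Real.pi : ℂ) * I) ≠ 0 := by simp [Real.pi_ne_zero, I_ne_zero]
  rcases eq_or_ne z (conj w) with rfl | hz
  · simp [kernelNumerator, eSharp, mul_comm]
  · rw [kfun_eq_kernelNumerator_div]
    field_simp [sub_ne_zero.mpr hz]

lemma sfun_conj_mul_kernelNumerator (e : ℂ → ℂ) (γ : ℝ) (z w : ℂ) :
    sfun e γ (conj w) * kernelNumerator e z (conj w)
      = sfun e γ w * kernelNumerator e z w - sfun e γ z * kernelNumerator e w w := by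
  simp only [sfun, kernelNumerator, eSharp, conj_conj]
  ring

theorem stmt13_general (e : ℂ → ℂ) (γ : ℝ) (w : ℂ)
    (hsw : sfun e γ w ≠ 0)
    (z : ℂ) (hz : z ≠ w) :
    sfun e γ ((starRingEnd ℂ) w) * kfun e z ((starRingEnd ℂ) w)
      = sfun e γ w *
        (kfun e z w + (w - (starRingEnd ℂ) w) * res e γ w (fun u => kfun e u w) z) := by
  have hzw : z - w ≠ 0 := sub_ne_zero.mpr hz
  apply mul_left_cancel₀ hzw
  calc (z - w) * (sfun e γ (conj w) * kfun e z (conj w))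
      = sfun e γ (conj w) * ((z - conj (conj w)) * kfun e z (conj w)) := by
        rw [conj_conj]; ring
    _ = (sfun e γ w * kernelNumerator e z w - sfun e γ z * kernelNumerator e w w)
          / (2 * (Real.pi : ℂ) * I) := by
        rw [sub_conj_mul_kfun, ← sfun_conj_mul_kernelNumerator, mul_div_assoc]
    _ = sfun e γ w * ((z - conj w) * kfun e z w)
          - sfun e γ z * ((w - conj w) * kfun e w w) := by
        rw [sub_conj_mul_kfun, sub_conj_mul_kfun]; ring
    _ = (z - w) *
          (sfun e γ w * (kfun e z w + (w - conj w) * res e γ w (fun u => kfun e u w) z)) := by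
        simp only [res]
        field_simp
        ring

/-- For nonreal `w` (with `s_γ(w), s_γ(w̄) ≠ 0`), and the Cayley transform
`U(w) = (S_γ - w̄I)(S_γ - wI)⁻¹ = I + (w - w̄)(S_γ - wI)⁻¹`:
`s_γ(w̄)·k(z,w̄) = s_γ(w)·(U(w) k(·,w))(z)`. -/
theorem stmt13 (e : ℂ → ℂ) (he : Differentiable ℂ e) (γ : ℝ) (w : ℂ) (hw : w.im ≠ 0)
    (hsw : sfun e γ w ≠ 0) (hsw' : sfun e γ ((starRingEnd ℂ) w) ≠ 0)
    (z : ℂ) (hz : z ≠ w) :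
    sfun e γ ((starRingEnd ℂ) w) * kfun e z ((starRingEnd ℂ) w)
      = sfun e γ w *
        (kfun e z w + (w - (starRingEnd ℂ) w) * res e γ w (fun u => kfun e u w) z) :=
  stmt13_general e γ w hsw z hz
end

section
/- With B, k, S_γ, s_γ as above, for a nonreal w₀ and z ≠ w₀: (S* − w₀I)(S_γ − w̄₀I)^{-1}k(v,z) = [(z̄ − w₀)/(z̄ − w̄₀)]·k(v,z) − [(w̄₀ − w₀)/(z̄ − w̄₀)]·(s_γ(z̄)/s_γ(w̄₀))·k(v,w₀), where the expression is viewed as a function of v. -/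
open Complex

/-!
Write `k(v, z) = D(v, z̄) / (2πi (v - z̄))`, where `D(a, b) = e^#(a) e(b) - e(a) e^#(b)`. Since
`s_γ` is a linear combination of `e` and `e^#`, the `3 × 3` determinant with rows `s_γ`, `e^#`, `e`
evaluated at `a, b, c` vanishes; its expansion along the first row,
`s_γ(a) D(b, c) - s_γ(b) D(a, c) + s_γ(c) D(a, b) = 0`, taken at `a, b, c = v, w̄, z̄`, is exactly the
resolvent identity `(S_γ - w̄I)⁻¹ k_z = (k_z - (s_γ(z̄)/s_γ(w̄)) k_w) / (z̄ - w̄)`. The theorem follows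
by adding `k_z` to `w̄₀ - w₀` times it.
-/

noncomputable def kernelDet (e : ℂ → ℂ) (a b : ℂ) : ℂ :=
  eSharp e a * e b - e a * eSharp e b

lemma kfun_eq_kernelDet (e : ℂ → ℂ) (a b : ℂ) :
    kfun e a b = kernelDet e a (starRingEnd ℂ b) / (2 * (Real.pi : ℂ) * I * (a - starRingEnd ℂ b)) :=
  rfl

lemma kfun_conj_comm (e : ℂ → ℂ) (a b : ℂ) :
    kfun e (starRingEnd ℂ a) b = kfun e (starRingEnd ℂ b) a := by
  rw [kfun_eq_kernelDet, kfun_eq_kernelDet, ← neg_div_neg_eq, ← mul_neg, neg_sub]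
  unfold kernelDet
  ring

lemma sfun_mul_kernelDet_expansion (e : ℂ → ℂ) (γ : ℝ) (a b c : ℂ) :
    sfun e γ a * kernelDet e b c - sfun e γ b * kernelDet e a c + sfun e γ c * kernelDet e a b
      = 0 := by
  unfold sfun kernelDet
  ring

lemma res_kfun (e : ℂ → ℂ) (γ : ℝ) (w z v : ℂ) (hz : z ≠ w)
    (hs : sfun e γ (starRingEnd ℂ w) ≠ 0) (hv : v ≠ starRingEnd ℂ w) :
    res e γ (starRingEnd ℂ w) (fun u => kfun e u z) v
      = (kfun e v z - sfun e γ (starRingEnd ℂ z) / sfun e γ (starRingEnd ℂ w) * kfun e v w)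
        / (starRingEnd ℂ z - starRingEnd ℂ w) := by
  dsimp only [res]
  by_cases hvz : v = starRingEnd ℂ z
  · -- both sides see the junk value `k(z̄, z) = 0`
    subst hvz
    have hk : kfun e (starRingEnd ℂ z) z = 0 := by
      rw [kfun_eq_kernelDet, sub_self, mul_zero, div_zero]
    rw [hk, kfun_conj_comm e w z]
  · have hvw : v - starRingEnd ℂ w ≠ 0 := sub_ne_zero.mpr hv
    have hvz' : v - starRingEnd ℂ z ≠ 0 := sub_ne_zero.mpr hvz
    have hzw : starRingEnd ℂ z - starRingEnd ℂ w ≠ 0 :=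
      sub_ne_zero.mpr ((starRingEnd ℂ).injective.ne hz)
    have hwz : starRingEnd ℂ w - starRingEnd ℂ z ≠ 0 :=
      sub_ne_zero.mpr ((starRingEnd ℂ).injective.ne hz.symm)
    rw [div_eq_div_iff hvw hzw]
    simp only [kfun_eq_kernelDet]
    field_simp
    linear_combination (starRingEnd ℂ w - starRingEnd ℂ z) * (v - starRingEnd ℂ z) *
      sfun_mul_kernelDet_expansion e γ v (starRingEnd ℂ w) (starRingEnd ℂ z)

theorem stmt14_general (e : ℂ → ℂ) (γ : ℝ) (w₀ z : ℂ)
    (hz : z ≠ w₀) (hs : sfun e γ ((starRingEnd ℂ) w₀) ≠ 0)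
    (v : ℂ) (hv : v ≠ (starRingEnd ℂ) w₀) :
    kfun e v z
      + ((starRingEnd ℂ) w₀ - w₀) * res e γ ((starRingEnd ℂ) w₀) (fun u => kfun e u z) v
      = ((starRingEnd ℂ) z - w₀) / ((starRingEnd ℂ) z - (starRingEnd ℂ) w₀) * kfun e v z
        - ((starRingEnd ℂ) w₀ - w₀) / ((starRingEnd ℂ) z - (starRingEnd ℂ) w₀)
          * (sfun e γ ((starRingEnd ℂ) z) / sfun e γ ((starRingEnd ℂ) w₀)) * kfun e v w₀ := by
  have hzw : starRingEnd ℂ z - starRingEnd ℂ w₀ ≠ 0 :=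
    sub_ne_zero.mpr ((starRingEnd ℂ).injective.ne hz)
  rw [res_kfun e γ w₀ z v hz hs hv]
  field_simp
  ring

/-- For nonreal `w₀` with `s_γ(w̄₀) ≠ 0` and `z ≠ w₀`, the function
`(S* - w₀I)(S_γ - w̄₀I)⁻¹ k(·,z) = k(·,z) + (w̄₀ - w₀)(S_γ - w̄₀I)⁻¹ k(·,z)` of `v`
equals `((z̄ - w₀)/(z̄ - w̄₀))·k(v,z) - ((w̄₀ - w₀)/(z̄ - w̄₀))·(s_γ(z̄)/s_γ(w̄₀))·k(v,w₀)`. -/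
theorem stmt14 (e : ℂ → ℂ) (he : Differentiable ℂ e) (γ : ℝ) (w₀ z : ℂ)
    (hw : w₀.im ≠ 0) (hz : z ≠ w₀) (hs : sfun e γ ((starRingEnd ℂ) w₀) ≠ 0)
    (v : ℂ) (hv : v ≠ (starRingEnd ℂ) w₀) :
    kfun e v z
      + ((starRingEnd ℂ) w₀ - w₀) * res e γ ((starRingEnd ℂ) w₀) (fun u => kfun e u z) v
      = ((starRingEnd ℂ) z - w₀) / ((starRingEnd ℂ) z - (starRingEnd ℂ) w₀) * kfun e v z
        - ((starRingEnd ℂ) w₀ - w₀) / ((starRingEnd ℂ) z - (starRingEnd ℂ) w₀)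
          * (sfun e γ ((starRingEnd ℂ) z) / sfun e γ ((starRingEnd ℂ) w₀)) * kfun e v w₀ :=
  stmt14_general e γ w₀ z hz hs v hv
end

section
/- In the setting above, the Krein Q-function q(w) := ⟨R̂_{π/2}(i)s₀, (I + w·S_{π/2})(S_{π/2} − wI)^{-1} R̂_{π/2}(i)s₀⟩ satisfies q(w) = π·Re(s₀(i)/s_{π/2}(i)) − π·s₀(w)/s_{π/2}(w) for all nonreal w. -/
/-!
Expressing the kernel through `s₀` and `s_{π/2}` turns `g = R̂_{π/2}(i)s₀` into the function with
`(z - i) g(z) = s₀(z) - (s₀(i)/s_{π/2}(i)) s_{π/2}(z)`. Pairing with `g` is evaluation at `-i`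
(reproducing property), and the resolvent relation at `z = -i` together with
`1 + w² = (w - i)(w + i)` reduces `q(w)` to values of `s₀`, `s_{π/2}` at `±i` and `w`; the two
terms at `±i` are conjugate and combine to the real part.
-/

open Complex

open scoped InnerProductSpace

open scoped ComplexConjugate

namespace DeBranges

variable (e : ℂ → ℂ)

theorem sfun_pi_div_two (z : ℂ) : sfun e (Real.pi / 2) z = -(e z + eSharp e z) / 2 := by
  have h : Complex.exp (I * ((Real.pi / 2 : ℝ) : ℂ)) = I := by
    rw [mul_comm, Complex.exp_mul_I, ← Complex.ofReal_cos, ← Complex.ofReal_sin,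
      Real.cos_pi_div_two, Real.sin_pi_div_two]
    simp
  rw [sfun, h, Complex.exp_neg, h, Complex.inv_I]
  linear_combination ((e z + eSharp e z) / 2) * Complex.I_sq

theorem sfun_zero (z : ℂ) : sfun e 0 z = I / 2 * (e z - eSharp e z) := by
  simp [sfun]

theorem conj_sfun (γ : ℝ) (z : ℂ) : conj (sfun e γ z) = sfun e γ (conj z) := by
  simp only [sfun, eSharp, map_mul, map_sub, map_div₀, Complex.conj_I, map_ofNat,
    ← Complex.exp_conj, map_neg, Complex.conj_ofReal, Complex.conj_conj, neg_mul, neg_neg]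
  ring

/-- The kernel in terms of the pair `A = -s_{π/2}`, `B = s₀` with `e = A - iB`; it holds also
on the diagonal `z = conj w`, where both sides are `0`. -/
theorem kfun_eq (z w : ℂ) :
    kfun e z w = (sfun e (Real.pi / 2) z * sfun e 0 (conj w)
      - sfun e 0 z * sfun e (Real.pi / 2) (conj w)) / (Real.pi * (z - conj w)) := by
  have hnum : eSharp e z * e (conj w) - e z * eSharp e (conj w)
      = 2 * I * (sfun e (Real.pi / 2) z * sfun e 0 (conj w)
        - sfun e 0 z * sfun e (Real.pi / 2) (conj w)) := by
    simp only [sfun_pi_div_two, sfun_zero]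
    linear_combination (eSharp e z * e (conj w) - e z * eSharp e (conj w)) * Complex.I_sq
  have hden : 2 * (Real.pi : ℂ) * I * (z - conj w) = 2 * I * (Real.pi * (z - conj w)) := by ring
  rw [kfun, hnum, hden, mul_div_mul_left _ _ (mul_ne_zero two_ne_zero Complex.I_ne_zero)]

theorem ofReal_re_div_sfun (γ δ : ℝ) (z : ℂ) :
    ((sfun e γ z / sfun e δ z).re : ℂ)
      = (sfun e γ z / sfun e δ z + sfun e γ (conj z) / sfun e δ (conj z)) / 2 := by
  rw [Complex.re_eq_add_conj, map_div₀, conj_sfun, conj_sfun]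

/-- `G` plays `R̂_{π/2}(i)s₀` and `R` its image under `(S_{π/2} - w)⁻¹`. -/
theorem krein_q_eq_of_resolvent_relations {s c G R : ℂ → ℂ} {w : ℂ}
    (hcw : c w ≠ 0) (hcmI : c (-I) ≠ 0)
    (hG : ∀ z, (z - I) * G z = s z - s I / c I * c z)
    (hR : (-I - w) * R (-I) = G (-I) - c (-I) / c w * G w) :
    -(Real.pi / c (-I)) * (w * G (-I) + (1 + w ^ 2) * R (-I))
      = Real.pi * ((s I / c I + s (-I) / c (-I)) / 2) - Real.pi * (s w / c w) := by
  have hsum : w * G (-I) + (1 + w ^ 2) * R (-I)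
      = -(s (-I) - s I / c I * c (-I)) / 2 + c (-I) / c w * (s w - s I / c I * c w) := by
    rw [← hG w]
    linear_combination (I - w) * hR - (1 / 2) * hG (-I) + R (-I) * Complex.I_sq
  rw [hsum]
  field_simp
  ring

end DeBranges

open DeBranges

-- `(I + wS)(S - w)⁻¹ = w + (1 + w²)(S - w)⁻¹`, so the inner product below is `q(w)`.
theorem stmt16_general {B : Type*} [NormedAddCommGroup B] [InnerProductSpace ℂ B]
    (e : ℂ → ℂ)
    (ev : B →ₗ[ℂ] (ℂ → ℂ)) (K : ℂ → B)
    (hK : ∀ (w : ℂ) (f : B), (inner ℂ (K w) f : ℂ) = ev f w)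
    (hKk : ∀ z w : ℂ, ev (K w) z = kfun e z w)
    (w : ℂ)
    (hsw : sfun e (Real.pi / 2) w ≠ 0) (hsi : sfun e (Real.pi / 2) I ≠ 0)
    (g rg : B)
    (hg : g = (-(Real.pi : ℂ) / sfun e (Real.pi / 2) I) • K (-I))
    (hrg : ∀ z : ℂ, (z - w) * ev rg z
      = ev g z - sfun e (Real.pi / 2) z / sfun e (Real.pi / 2) w * ev g w) :
    (inner ℂ g (w • g + (1 + w ^ 2) • rg) : ℂ)
      = (Real.pi : ℂ) * ((sfun e 0 I / sfun e (Real.pi / 2) I).re : ℂ)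
        - (Real.pi : ℂ) * (sfun e 0 w / sfun e (Real.pi / 2) w) := by
  have hconjI : conj (sfun e (Real.pi / 2) I) = sfun e (Real.pi / 2) (-I) := by
    rw [conj_sfun, Complex.conj_I]
  have hsmI : sfun e (Real.pi / 2) (-I) ≠ 0 := hconjI ▸ (map_ne_zero _).mpr hsi
  have hinner : ∀ x : B,
      inner ℂ g x = -(Real.pi / sfun e (Real.pi / 2) (-I)) * ev x (-I) := by
    intro x
    rw [hg, inner_smul_left, hK, map_div₀, map_neg, Complex.conj_ofReal, hconjI, neg_div]
  have hG : ∀ z, (z - I) * ev g z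
      = sfun e 0 z - sfun e 0 I / sfun e (Real.pi / 2) I * sfun e (Real.pi / 2) z := by
    intro z
    rcases eq_or_ne z I with rfl | hz
    · rw [sub_self, zero_mul, div_mul_cancel₀ _ hsi, sub_self]
    rw [hg, map_smul, Pi.smul_apply, smul_eq_mul, hKk, kfun_eq, map_neg, Complex.conj_I, neg_neg]
    field_simp [sub_ne_zero.mpr hz]
    ring
  rw [hinner, map_add, map_smul, map_smul, ofReal_re_div_sfun, Complex.conj_I]
  exact krein_q_eq_of_resolvent_relations hsw hsmI hG (hrg (-I))

/-- In the setting of a de Branges space `B = B(e)` (`e` Hermite–Biehler,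
no real zeros) realized as an RKHS with evaluation `ev` and kernel vectors `K`,
let `g = R̂_{π/2}(i) s₀ = -(π/s_{π/2}(i)) K(-i)` and let `rg = (S_{π/2} - wI)⁻¹ g`
(characterized by `(z - w)·(ev rg)(z) = (ev g)(z) - (s_{π/2}(z)/s_{π/2}(w))(ev g)(w)`).
Then the Krein Q-function
`q(w) = ⟪g, (I + w S_{π/2})(S_{π/2} - wI)⁻¹ g⟫ = ⟪g, w•g + (1+w²)•rg⟫`
satisfies `q(w) = π·Re(s₀(i)/s_{π/2}(i)) - π·s₀(w)/s_{π/2}(w)` for nonreal `w`. -/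
theorem stmt16 {B : Type*} [NormedAddCommGroup B] [InnerProductSpace ℂ B] [CompleteSpace B]
    (e : ℂ → ℂ) (he : Differentiable ℂ e)
    (hHB : ∀ z : ℂ, 0 < z.im → ‖e ((starRingEnd ℂ) z)‖ < ‖e z‖)
    (hnoreal : ∀ x : ℝ, e x ≠ 0)
    (ev : B →ₗ[ℂ] (ℂ → ℂ)) (K : ℂ → B)
    (hK : ∀ (w : ℂ) (f : B), (inner ℂ (K w) f : ℂ) = ev f w)
    (hKk : ∀ z w : ℂ, ev (K w) z = kfun e z w)
    (w : ℂ) (hw : w.im ≠ 0)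
    (hsw : sfun e (Real.pi / 2) w ≠ 0) (hsi : sfun e (Real.pi / 2) I ≠ 0)
    (g rg : B)
    (hg : g = (-(Real.pi : ℂ) / sfun e (Real.pi / 2) I) • K (-I))
    (hrg : ∀ z : ℂ, (z - w) * ev rg z
      = ev g z - sfun e (Real.pi / 2) z / sfun e (Real.pi / 2) w * ev g w) :
    (inner ℂ g (w • g + (1 + w ^ 2) • rg) : ℂ)
      = (Real.pi : ℂ) * ((sfun e 0 I / sfun e (Real.pi / 2) I).re : ℂ)
        - (Real.pi : ℂ) * (sfun e 0 w / sfun e (Real.pi / 2) w) :=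
  stmt16_general e ev K hK hKk w hsw hsi g rg hg hrg
end

section
/- In the setting above, for every nonreal w and every γ ∈ (0,π): (S_γ − wI)^{-1} − (S_{π/2} − wI)^{-1} = [π·tanγ + π·s₀(w)/s_{π/2}(w)]^{-1} · ⟨R̂_{π/2}(w̄)s₀, ·⟩ · R̂_{π/2}(w)s₀, i.e., for every f ∈ B, (S_γ − wI)^{-1}f − (S_{π/2} − wI)^{-1}f = (cosγ / (π s_γ(w)))·s_{π/2}(w)·⟨R̂_{π/2}(w̄)s₀, f⟩·R̂_{π/2}(w)s₀(z). -/
/-!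
Expanding `e^{±iγ}` gives `s_γ = cos γ · s₀ + sin γ · s_{π/2}`, so the combination
`s_β(z) s_γ(w) - s_γ(z) s_β(w)` equals `sin (β - γ)` times the one for `(β, γ) = (π/2, 0)`,
and the latter is `π (z - w) k(z, w̄)`: the familiar expression of the de Branges kernel through
`A = -s_{π/2}` and `B = s₀`. The difference of two resolvents is this combination times
`f(w) / (s_γ(w) s_β(w) (z - w))`, and `sin (π/2 - γ) = cos γ`.
-/

open Complex

theorem sfun_zero (e : ℂ → ℂ) (z : ℂ) : sfun e 0 z = I / 2 * (e z - eSharp e z) := by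
  simp [sfun]

theorem sfun_pi_div_two (e : ℂ → ℂ) (z : ℂ) :
    sfun e (Real.pi / 2) z = -(e z + eSharp e z) / 2 := by
  have hexp : Complex.exp (I * (Real.pi / 2 : ℝ)) = I := by
    rw [mul_comm]; push_cast; exact Complex.exp_pi_div_two_mul_I
  rw [sfun, Complex.exp_neg, hexp, inv_I]
  linear_combination (e z + eSharp e z) / 2 * I_sq

theorem sfun_eq_cos_mul_add_sin_mul (e : ℂ → ℂ) (γ : ℝ) (z : ℂ) :
    sfun e γ z = Real.cos γ * sfun e 0 z + Real.sin γ * sfun e (Real.pi / 2) z := by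
  rw [sfun, sfun_zero, sfun_pi_div_two, mul_comm I, ← neg_mul, Complex.exp_mul_I,
    Complex.exp_mul_I, Complex.cos_neg, Complex.sin_neg, Complex.ofReal_cos, Complex.ofReal_sin]
  linear_combination (Complex.sin γ * (e z + eSharp e z) / 2) * I_sq

theorem kfun_conj_eq (e : ℂ → ℂ) (z w : ℂ) :
    kfun e z (starRingEnd ℂ w)
      = (sfun e (Real.pi / 2) z * sfun e 0 w - sfun e 0 z * sfun e (Real.pi / 2) w)
          / (Real.pi * (z - w)) := by
  have hπ : (Real.pi : ℂ) ≠ 0 := by exact_mod_cast Real.pi_ne_zero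
  rw [kfun, sfun_zero, sfun_zero, sfun_pi_div_two, sfun_pi_div_two, Complex.conj_conj]
  field_simp
  rw [I_sq]
  ring

theorem sfun_mul_sfun_sub_sfun_mul_sfun (e : ℂ → ℂ) (β γ : ℝ) (z w : ℂ) :
    sfun e β z * sfun e γ w - sfun e γ z * sfun e β w
      = Real.sin (β - γ) * (sfun e (Real.pi / 2) z * sfun e 0 w
          - sfun e 0 z * sfun e (Real.pi / 2) w) := by
  rw [sfun_eq_cos_mul_add_sin_mul e β z, sfun_eq_cos_mul_add_sin_mul e β w,
    sfun_eq_cos_mul_add_sin_mul e γ z, sfun_eq_cos_mul_add_sin_mul e γ w, Real.sin_sub]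
  push_cast
  ring

theorem res_sub_res (e : ℂ → ℂ) (β γ : ℝ) (w : ℂ) (f : ℂ → ℂ) (z : ℂ)
    (hγ : sfun e γ w ≠ 0) (hβ : sfun e β w ≠ 0) :
    res e γ w f z - res e β w f z
      = (sfun e β z * sfun e γ w - sfun e γ z * sfun e β w) * f w
          / (sfun e γ w * sfun e β w * (z - w)) := by
  rw [res, res, ← sub_div, ← div_div]
  congr 1
  field_simp
  ring

theorem stmt17_general (e : ℂ → ℂ) (γ : ℝ) (w : ℂ)
    (hsγ : sfun e γ w ≠ 0) (hs : sfun e (Real.pi / 2) w ≠ 0)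
    (f : ℂ → ℂ) (z : ℂ) :
    res e γ w f z - res e (Real.pi / 2) w f z
      = (Real.cos γ : ℂ) / ((Real.pi : ℂ) * sfun e γ w) * sfun e (Real.pi / 2) w
        * (-(Real.pi : ℂ) / sfun e (Real.pi / 2) w * f w)
        * (-(Real.pi : ℂ) / sfun e (Real.pi / 2) w * kfun e z ((starRingEnd ℂ) w)) := by
  have hπ : (Real.pi : ℂ) ≠ 0 := by exact_mod_cast Real.pi_ne_zero
  rw [res_sub_res e _ _ w f z hsγ hs, sfun_mul_sfun_sub_sfun_mul_sfun, Real.sin_pi_div_two_sub,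
    kfun_conj_eq]
  field_simp

/-- Krein's formula for the canonical selfadjoint extensions of the
multiplication operator in a de Branges space `B(e)` (`e` Hermite–Biehler without real
zeros): for nonreal `w`, `γ ∈ (0,π)`, and every `f ∈ B`, pointwise in `z`:
`(S_γ - wI)⁻¹f(z) - (S_{π/2} - wI)⁻¹f(z)
   = (cos γ/(π s_γ(w)))·s_{π/2}(w)·⟨R̂_{π/2}(w̄)s₀, f⟩·R̂_{π/2}(w)s₀(z)`,
where `⟨R̂_{π/2}(w̄)s₀, f⟩ = -(π/s_{π/2}(w)) f(w)` and
`R̂_{π/2}(w)s₀(z) = -(π/s_{π/2}(w)) k(z,w̄)`. -/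
theorem stmt17 (e : ℂ → ℂ) (he : Differentiable ℂ e)
    (hHB : ∀ z : ℂ, 0 < z.im → ‖e ((starRingEnd ℂ) z)‖ < ‖e z‖)
    (hnoreal : ∀ x : ℝ, e x ≠ 0)
    (γ : ℝ) (hγ : γ ∈ Set.Ioo 0 Real.pi)
    (w : ℂ) (hw : w.im ≠ 0)
    (hsγ : sfun e γ w ≠ 0) (hs : sfun e (Real.pi / 2) w ≠ 0)
    (f : ℂ → ℂ) (z : ℂ) (hz : z ≠ w) :
    res e γ w f z - res e (Real.pi / 2) w f z
      = (Real.cos γ : ℂ) / ((Real.pi : ℂ) * sfun e γ w) * sfun e (Real.pi / 2) w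
        * (-(Real.pi : ℂ) / sfun e (Real.pi / 2) w * f w)
        * (-(Real.pi : ℂ) / sfun e (Real.pi / 2) w * kfun e z ((starRingEnd ℂ) w)) :=
  stmt17_general e γ w hsγ hs f z
end

section
/- In the Paley–Wiener space PW_a = {f(z) = ∫_{−a}^{a} e^{izx}φ(x)dx : φ ∈ L²(−a,a)}, the Fourier transform intertwines the adjoint S* of the multiplication operator with the maximal differential operator φ ↦ iφ' on AC[−a,a]; consequently, taking φ(x) = e^{−x} and w₀ = π/a − i (a nonreal zero of the transform f of φ), the function η(x) = e^{−x} + i(2a/π)e^{−x}(1 + e^{−iπx/a}) whose Fourier transform is ((z − w̄₀)/(z − w₀))f(z) satisfies ‖η'‖_{L²(−a,a)} ≠ ‖φ'‖_{L²(−a,a)}. -/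
open Complex intervalIntegral ComplexConjugate

/-!
Both `φ` and `η` lie in the family `e^{-x}(A + B e^{-imx})` with `m = π/a`, which is closed
under differentiation. Since `m a = π`, the cross term `e^{(-2+im)x}` integrates over `[-a, a]`
to the same multiple of `sinh (2a)` as `e^{-2x}`, so the `L²` norm squared of such a function is
`sinh (2a)` times an explicit quadratic expression in `A` and `B`. For `φ'` this factor is `1`,
for `η'` it is `5` (using `(2a/π) · m = 2`). The zero `f(w₀) = 0` holds because the integrand
collapses to `e^{iπx/a}`, whose integral over `[-a, a]` is a multiple of `sin π`.
-/

noncomputable def dampedPair (A B : ℂ) (m x : ℝ) : ℂ := exp (-x) * (A + B * exp (-(I * m * x)))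

noncomputable def normSqFactor (A B : ℂ) (m : ℝ) : ℝ :=
  ‖A‖ ^ 2 + ‖B‖ ^ 2 + 4 * (A * conj B / (-2 + I * m)).re

theorem integral_exp_mul_complex_symm {z : ℂ} (hz : z ≠ 0) (a : ℝ) :
    ∫ x in (-a)..a, exp (z * x) = 2 * sinh (z * a) / z := by
  rw [integral_exp_mul_complex hz, two_sinh]
  push_cast
  ring_nf

theorem hasDerivAt_dampedPair (A B : ℂ) (m x : ℝ) :
    HasDerivAt (dampedPair A B m) (dampedPair (-A) (-(1 + I * m) * B) m x) x := by
  have hdecay : HasDerivAt (fun y : ℝ => exp (-(y : ℂ))) (-exp (-(x : ℂ))) x := by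
    simpa using ((hasDerivAt_id (x : ℂ)).neg.cexp).comp_ofReal
  have hwave : HasDerivAt (fun y : ℝ => A + B * exp (-(I * m * y)))
      (-(B * (exp (-(I * m * x)) * (I * m)))) x := by
    simpa using
      ((((hasDerivAt_id (x : ℂ)).const_mul (I * m)).neg.cexp).comp_ofReal.const_mul B).const_add A
  exact (hdecay.mul hwave).congr_deriv (by simp only [dampedPair]; ring)

theorem norm_sq_dampedPair (A B : ℂ) (m x : ℝ) :
    ‖dampedPair A B m x‖ ^ 2 = (exp (-2 * x) * (‖A‖ ^ 2 + ‖B‖ ^ 2 : ℝ)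
      + 2 * (A * conj B) * exp ((-2 + I * m) * x)).re := by
  have hdecay : exp (-2 * (x : ℂ)) = (Real.exp (-x) ^ 2 : ℝ) := by
    rw [← Real.exp_nat_mul]; push_cast; ring_nf
  have hsplit : exp ((-2 + I * m) * x) = exp (-2 * (x : ℂ)) * conj (exp (-(I * m * x))) := by
    rw [← exp_conj, ← exp_add]
    simp only [neg_mul, map_neg, map_mul, conj_I, conj_ofReal, neg_neg]
    ring_nf
  have hwave : ‖exp (-(I * m * x))‖ = 1 := by
    rw [show -(I * m * x) = ((-(m * x) : ℝ) : ℂ) * I by push_cast; ring, norm_exp_ofReal_mul_I]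
  rw [dampedPair, norm_mul, mul_pow, norm_exp, neg_re, ofReal_re, Complex.sq_norm, normSq_add,
    normSq_mul, ← Complex.sq_norm, ← Complex.sq_norm, ← Complex.sq_norm, hwave, hsplit, hdecay,
    mul_left_comm _ ((Real.exp (-x) ^ 2 : ℝ) : ℂ), ← mul_add, re_ofReal_mul, add_re, ofReal_re]
  simp [mul_assoc]

theorem integral_norm_sq_dampedPair (A B : ℂ) {m a : ℝ} (hma : m * a = Real.pi) :
    ∫ x in (-a)..a, ‖dampedPair A B m x‖ ^ 2 = Real.sinh (2 * a) * normSqFactor A B m := by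
  have hF : Continuous fun x : ℝ => exp (-2 * x) * ((‖A‖ ^ 2 + ‖B‖ ^ 2 : ℝ) : ℂ)
      + 2 * (A * conj B) * exp ((-2 + I * m) * x) := by fun_prop
  have hre := intervalIntegral_re (hF.intervalIntegrable (μ := MeasureTheory.volume) (-a) a)
  simp only [RCLike.re_to_complex] at hre
  have hshift : sinh ((-2 + I * m) * a) = sinh (2 * a) := by
    rw [show (-2 + I * m) * (a : ℂ) = -(2 * a) + Real.pi * I by
      rw [← hma]; push_cast; ring, sinh_add_pi_mul_I, sinh_neg, neg_neg]
  have hμ : (-2 + I * m : ℂ) ≠ 0 := fun h => by simpa using congrArg re h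
  have h2a : sinh (2 * (a : ℂ)) = Real.sinh (2 * a) := by push_cast; rfl
  simp_rw [norm_sq_dampedPair]
  rw [hre, integral_add, integral_mul_const, integral_const_mul,
    integral_exp_mul_complex_symm (by norm_num), integral_exp_mul_complex_symm hμ, hshift,
    neg_mul, sinh_neg, h2a]
  · trans ((Real.sinh (2 * a) : ℂ) * (((‖A‖ ^ 2 + ‖B‖ ^ 2 : ℝ) : ℂ)
      + 4 * (A * conj B / (-2 + I * m)))).re
    · congr 1; ring
    · rw [re_ofReal_mul, add_re, ofReal_re]; simp [normSqFactor]
  all_goals exact Continuous.intervalIntegrable (by fun_prop) _ _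

theorem normSqFactor_deriv_eq_five {c m : ℝ} (hcm : c * m = 2) :
    normSqFactor (-(1 + I * c)) (-(1 + I * m) * (I * c)) m = 5 := by
  have hcm' : (c : ℂ) * m = 2 := by exact_mod_cast hcm
  rw [normSqFactor,
    show -(1 + I * m) * (I * c) = 2 - I * c by linear_combination (-(m * c : ℂ)) * I_sq + hcm']
  simp only [neg_add_rev, Complex.sq_norm, normSq_apply, add_re, neg_re, mul_re, I_re, ofReal_re,
    zero_mul, I_im, ofReal_im, mul_zero, sub_self, neg_zero, one_re, zero_add, mul_neg, mul_one,
    neg_neg, add_im, neg_im, mul_im, one_mul, one_im, add_zero, neg_mul, sub_re, re_ofNat, sub_zero,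
    sub_im, im_ofNat, zero_sub, map_sub, map_mul, conj_I, conj_ofReal, sub_neg_eq_add, div_re,
    conj_re, conj_im]
  field_simp
  linear_combination (2 * c * m - 8) * hcm

/-- In the Paley–Wiener space `PW_a`, with `φ(x) = e^{-x}`,
`f(z) = ∫_{-a}^a e^{izx} φ(x) dx`, and `w₀ = π/a - i`: one has `f(w₀) = 0`, and the
function `η(x) = e^{-x} + i(2a/π) e^{-x}(1 + e^{-iπx/a})` — whose Fourier transform is
`((z - w̄₀)/(z - w₀)) f(z)` — satisfies `‖η'‖_{L²(-a,a)} ≠ ‖φ'‖_{L²(-a,a)}`.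
Hence the graph norm of `S*` is not invariant under the de Branges mapping. -/
theorem stmt18 (a : ℝ) (ha : 0 < a)
    (φ η : ℝ → ℂ)
    (hφ : ∀ x : ℝ, φ x = Complex.exp (-(x : ℂ)))
    (hη : ∀ x : ℝ, η x = Complex.exp (-(x : ℂ))
      + I * (2 * a / Real.pi) * Complex.exp (-(x : ℂ))
        * (1 + Complex.exp (-(I * Real.pi * x / a)))) :
    (∫ x in (-a)..a, Complex.exp (I * ((Real.pi / a : ℝ) - I) * x) * φ x) = 0 ∧
    (∫ x in (-a)..a, ‖deriv η x‖ ^ 2) ≠ (∫ x in (-a)..a, ‖deriv φ x‖ ^ 2) := by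
  set m := Real.pi / a with hm
  set c := 2 * a / Real.pi with hc
  have hma : m * a = Real.pi := div_mul_cancel₀ _ ha.ne'
  have hcm : c * m = 2 := by rw [hc, hm]; field_simp
  have hφ_eq : φ = dampedPair 1 0 m := funext fun x => by simp [dampedPair, hφ]
  have hη_eq : η = dampedPair (1 + I * c) (I * c) m := funext fun x => by
    rw [hη, dampedPair, hm, hc]; push_cast; ring_nf
  refine ⟨?_, ?_⟩
  · have hmode : ∀ x : ℝ, exp (I * (m - I) * x) * φ x = exp (I * m * x) := fun x => by
      rw [hφ, ← exp_add]; congr 1; linear_combination (-(x : ℂ)) * I_sq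
    have hIm : I * (m : ℂ) ≠ 0 :=
      mul_ne_zero I_ne_zero (by exact_mod_cast (div_pos Real.pi_pos ha).ne')
    rw [integral_congr fun x _ => hmode x, integral_exp_mul_complex_symm hIm,
      show I * (m : ℂ) * a = Real.pi * I by rw [← hma]; push_cast; ring, sinh_mul_I, sin_pi]
    simp
  · have hpos : 0 < Real.sinh (2 * a) := Real.sinh_pos_iff.mpr (by positivity)
    simp only [hφ_eq, hη_eq, fun A B x => (hasDerivAt_dampedPair A B m x).deriv,
      integral_norm_sq_dampedPair _ _ hma, normSqFactor_deriv_eq_five hcm]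
    norm_num [normSqFactor, hpos.ne']
end

section
/- Let A be a selfadjoint extension of a densely defined closed symmetric operator S with deficiency indices (1,1) on a Hilbert space H, and let u span ker(S* + iI), so that S*u = −i·u. Then dom(S*) = {g = h + b·A(A − iI)^{-1}u : h ∈ dom(A), b ∈ ℂ}, and S*g = Ah − b·(A − iI)^{-1}u for such g. Moreover this decomposition is unique and ‖g‖²_{graph(S*)} = ‖h‖²_{graph(A)} + |b|²‖u‖². -/
open Complex

private lemma pmap_comb' {H : Type*} [NormedAddCommGroup H] [InnerProductSpace ℂ H]
    (T : H →ₗ.[ℂ] H) {x y z : H} (hx : x ∈ T.domain) (hy : y ∈ T.domain) (c : ℂ)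
    (hz : z ∈ T.domain) (hzeq : z = x + c • y) :
    T ⟨z, hz⟩ = T ⟨x, hx⟩ + c • T ⟨y, hy⟩ := by
  have h1 : (⟨z, hz⟩ : T.domain) = ⟨x, hx⟩ + c • ⟨y, hy⟩ := Subtype.ext (by simpa using hzeq)
  rw [h1, T.map_add, T.map_smul]

set_option maxHeartbeats 1000000 in
/-- Let `S` be a densely defined closed symmetric operator with deficiency
indices `(1,1)` on a complex Hilbert space `H` (the deficiency spaces `ker(S* ∓ iI)` are
spanned by `u` resp. `u'`), and let `A` be a selfadjoint extension of `S`, with resolvent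
`R = (A - iI)⁻¹`.  Then every `h + b·A(A - iI)⁻¹u` (`h ∈ dom A`, `b ∈ ℂ`) lies in
`dom(S*)`, and every `g ∈ dom(S*)` admits a unique such decomposition
`g = h + b·A(A - iI)⁻¹u`, for which moreover `S*g = Ah - b·(A - iI)⁻¹u` and
`‖g‖²_{graph(S*)} = ‖h‖²_{graph(A)} + |b|²·‖u‖²`. -/
theorem stmt19 {H : Type*} [NormedAddCommGroup H] [InnerProductSpace ℂ H] [CompleteSpace H]
    (S A : H →ₗ.[ℂ] H)
    (hdense : Dense (S.domain : Set H))
    (hsym : ∀ f g : S.domain, (inner ℂ (S f) (g : H) : ℂ) = inner ℂ ((f : H)) (S g))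
    (hclosed : S.IsClosed)
    (hA : IsSelfAdjoint A) (hext : S ≤ A)
    (u : H) (hu : u ∈ S.adjoint.domain) (hu0 : u ≠ 0)
    (huev : S.adjoint ⟨u, hu⟩ = (-I) • u)
    (huspan : ∀ v (hv : v ∈ S.adjoint.domain),
      S.adjoint ⟨v, hv⟩ = (-I) • v → ∃ c : ℂ, v = c • u)
    (u' : H) (hu' : u' ∈ S.adjoint.domain) (hu'0 : u' ≠ 0)
    (hu'ev : S.adjoint ⟨u', hu'⟩ = I • u')
    (hu'span : ∀ v (hv : v ∈ S.adjoint.domain),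
      S.adjoint ⟨v, hv⟩ = I • v → ∃ c : ℂ, v = c • u')
    (R : H →L[ℂ] H)
    (hmem : ∀ x : H, R x ∈ A.domain)
    (hR : ∀ x : H, A ⟨R x, hmem x⟩ - I • R x = x)
    (hR' : ∀ f : A.domain, R (A f - I • (f : H)) = f) :
    (∀ (h : A.domain) (b : ℂ),
        (h : H) + b • A ⟨R u, hmem u⟩ ∈ S.adjoint.domain) ∧
    (∀ g (hg : g ∈ S.adjoint.domain),
      ∃! p : A.domain × ℂ,
        g = (p.1 : H) + p.2 • A ⟨R u, hmem u⟩ ∧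
        S.adjoint ⟨g, hg⟩ = A p.1 - p.2 • R u ∧
        ‖S.adjoint ⟨g, hg⟩‖ ^ 2 + ‖g‖ ^ 2
          = (‖A p.1‖ ^ 2 + ‖(p.1 : H)‖ ^ 2) + ‖p.2‖ ^ 2 * ‖u‖ ^ 2) := by
  -- basic consequences of selfadjointness
  have hAd : A.adjoint = A := hA
  have hle : A ≤ A.adjoint := le_of_eq hAd.symm
  have symmA : ∀ x y : A.domain, (inner ℂ (A x) ((y:H)) : ℂ) = inner ℂ ((x:H)) (A y) := by
    intro x y
    have h1 := LinearPMap.adjoint_isFormalAdjoint (T := A) hA.dense_domain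
      ⟨(x:H), hle.1 x.2⟩ y
    rwa [← hle.2 (x := x) rfl] at h1
  have hformal : S.IsFormalAdjoint A := by
    intro x y
    have hx2 : (x:H) ∈ A.domain := hext.1 x.2
    have hSx : S x = A ⟨(x:H), hx2⟩ := hext.2 rfl
    rw [hSx]
    exact symmA ⟨(x:H), hx2⟩ y
  have hAS : A ≤ S.adjoint := LinearPMap.IsFormalAdjoint.le_adjoint hdense hformal
  have eqA : ∀ (f : A.domain), S.adjoint ⟨(f:H), hAS.1 f.2⟩ = A f :=
    fun f => (hAS.2 (x := f) rfl).symm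
  -- u is not in the domain of A
  have unotmem : u ∉ A.domain := by
    intro hmemu
    have h1 : A ⟨u, hmemu⟩ = (-I) • u := by
      rw [← eqA ⟨u, hmemu⟩]; exact huev
    have h2 := symmA ⟨u, hmemu⟩ ⟨u, hmemu⟩
    rw [h1, inner_smul_left, inner_smul_right] at h2
    have h3 : (inner ℂ u u : ℂ) = 0 := by
      have hc : (starRingEnd ℂ) (-I) = I := by simp
      rw [hc] at h2
      have h4 : (2 * I) * (inner ℂ u u : ℂ) = 0 := by linear_combination h2
      rcases mul_eq_zero.mp h4 with h | h
      · simp at h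
      · exact h
    exact hu0 (inner_self_eq_zero.mp h3)
  -- A (R x) = x + I • R x
  have hARu : ∀ x : H, (A ⟨R x, hmem x⟩ : H) = x + I • R x := by
    intro x
    exact sub_eq_iff_eq_add.mp (hR x)
  have memRu : R u ∈ S.adjoint.domain := hAS.1 (hmem u)
  have SdRu : S.adjoint ⟨R u, memRu⟩ = u + I • R u :=
    (eqA ⟨R u, hmem u⟩).trans (hARu u)
  have memQ : (A ⟨R u, hmem u⟩ : H) ∈ S.adjoint.domain := by
    rw [hARu u]
    exact Submodule.add_mem _ hu (Submodule.smul_mem _ _ memRu)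
  have part1 : ∀ (h : A.domain) (b : ℂ),
      (h : H) + b • A ⟨R u, hmem u⟩ ∈ S.adjoint.domain :=
    fun h b => Submodule.add_mem _ (hAS.1 h.2) (Submodule.smul_mem _ _ memQ)
  refine ⟨part1, ?_⟩
  intro g hg
  set Tg := S.adjoint ⟨g, hg⟩ with hTgdef
  set f : H := Tg - I • g with hf
  have memRf : R f ∈ S.adjoint.domain := hAS.1 (hmem f)
  have SdRf : S.adjoint ⟨R f, memRf⟩ = f + I • R f := (eqA ⟨R f, hmem f⟩).trans (hARu f)
  have memv : g - R f ∈ S.adjoint.domain := Submodule.sub_mem _ hg memRf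
  have Sdv : S.adjoint ⟨g - R f, memv⟩ = I • (g - R f) := by
    rw [pmap_comb' S.adjoint hg memRf (-1) memv (by module)]
    rw [SdRf, hf]
    rw [← hTgdef]
    module
  obtain ⟨c, hc⟩ := hu'span (g - R f) memv Sdv
  have memw : u + (2*I) • R u ∈ S.adjoint.domain :=
    Submodule.add_mem _ hu (Submodule.smul_mem _ _ memRu)
  have Sdw : S.adjoint ⟨u + (2*I) • R u, memw⟩ = I • (u + (2*I) • R u) := by
    rw [pmap_comb' S.adjoint hu memRu (2*I) memw rfl, huev, SdRu]
    match_scalars <;> (try ring_nf) <;> (try simp [Complex.I_sq]) <;> (try ring)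
  obtain ⟨c₀, hc₀⟩ := hu'span _ memw Sdw
  have hw0 : u + (2*I) • R u ≠ 0 := by
    intro h0
    apply unotmem
    have hueq : u = -((2*I) • R u) := by rw [eq_neg_iff_add_eq_zero]; exact h0
    rw [hueq]
    exact Submodule.neg_mem _ (Submodule.smul_mem _ _ (hmem u))
  have hc₀0 : c₀ ≠ 0 := by
    intro h0; apply hw0; rw [hc₀, h0, zero_smul]
  set b : ℂ := c / c₀ with hb
  have hvw : g - R f = b • (u + (2*I) • R u) := by
    rw [hc, hc₀, smul_smul, hb]
    congr 1
    field_simp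
  set hval : H := R f + (I*b) • R u with hhval
  have memh : hval ∈ A.domain := Submodule.add_mem _ (hmem f) (Submodule.smul_mem _ _ (hmem u))
  have hg2 : g = R f + b • (u + (2*I) • R u) := by rw [← hvw]; abel
  have E1 : g = hval + b • A ⟨R u, hmem u⟩ := by
    rw [hg2, hARu u, hhval]
    match_scalars <;> (try ring_nf) <;> (try simp [Complex.I_sq]) <;> (try ring)
  have Ahval : A ⟨hval, memh⟩ = (f + I • R f) + (I*b) • (u + I • R u) := by
    rw [pmap_comb' A (hmem f) (hmem u) (I*b) memh hhval, hARu f, hARu u]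
  have E2 : Tg = A ⟨hval, memh⟩ - b • R u := by
    have hTg2 : Tg = f + I • g := by rw [hf]; abel
    rw [hTg2, hg2, Ahval]
    match_scalars <;> (try ring_nf) <;> (try simp [Complex.I_sq]) <;> (try ring)
  -- norm identity
  have hrealARu : ((inner ℂ (A ⟨R u, hmem u⟩ : H) (R u) : ℂ)).im = 0 := by
    have h1 := symmA ⟨R u, hmem u⟩ ⟨R u, hmem u⟩
    have h2 : (inner ℂ (R u) (A ⟨R u, hmem u⟩ : H) : ℂ)
        = starRingEnd ℂ (inner ℂ (A ⟨R u, hmem u⟩ : H) (R u)) := (inner_conj_symm _ _).symm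
    exact Complex.conj_eq_iff_im.mp ((h1.trans h2).symm)
  have hu_eq : u = (A ⟨R u, hmem u⟩ : H) - I • R u := eq_sub_of_add_eq (hARu u).symm
  have h6 : (inner ℂ ((A ⟨R u, hmem u⟩ : H) - I • R u) (R u) : ℂ)
      = inner ℂ (A ⟨R u, hmem u⟩ : H) (R u) + I * (inner ℂ (R u) (R u) : ℂ) := by
    rw [inner_sub_left, inner_smul_left, Complex.conj_I]
    ring
  rw [← hu_eq] at h6
  have hinneruRu := h6
  have hRuim : ((inner ℂ (R u) (R u) : ℂ)).im = 0 := inner_self_im (𝕜 := ℂ) (R u)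
  have hRure : ((inner ℂ (R u) (R u) : ℂ)).re = ‖R u‖^2 := by
    have := inner_self_eq_norm_sq (𝕜 := ℂ) (R u)
    simpa [RCLike.re_to_complex] using this
  have hcross : (I * (inner ℂ u (R u) : ℂ)).re = -(‖R u‖^2) := by
    rw [hinneruRu, mul_add, ← mul_assoc, Complex.I_mul_I]
    simp [Complex.mul_re, hrealARu, hRure]
    norm_cast
  have hq : ‖u + I • R u‖^2 + ‖R u‖^2 = ‖u‖^2 := by
    have h1 := @norm_add_sq ℂ _ _ _ _ u (I • R u)
    rw [inner_smul_right] at h1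
    rw [norm_smul] at h1
    simp only [Complex.norm_I, one_mul, RCLike.re_to_complex] at h1
    rw [h1, hcross]
    ring
  have E3 : ‖Tg‖^2 + ‖g‖^2
      = (‖A ⟨hval, memh⟩‖^2 + ‖hval‖^2) + ‖b‖^2 * ‖u‖^2 := by
    have hgd : g = hval + b • (u + I • R u) := by rw [E1, hARu u]
    have hcross2 : (inner ℂ (A ⟨hval, memh⟩ : H) (b • R u) : ℂ)
        = inner ℂ hval (b • (u + I • R u)) := by
      rw [inner_smul_right, inner_smul_right]
      congr 1
      have h1 := symmA ⟨hval, memh⟩ ⟨R u, hmem u⟩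
      rw [h1, hARu u]
    have hn1 : ‖Tg‖^2 = ‖A ⟨hval, memh⟩‖^2
        - 2 * (inner ℂ (A ⟨hval, memh⟩ : H) (b • R u) : ℂ).re + ‖b • R u‖^2 := by
      rw [E2]
      have := @norm_sub_sq ℂ _ _ _ _ (A ⟨hval, memh⟩) (b • R u)
      simpa only [RCLike.re_to_complex] using this
    have hn2 : ‖g‖^2 = ‖hval‖^2
        + 2 * (inner ℂ hval (b • (u + I • R u)) : ℂ).re + ‖b • (u + I • R u)‖^2 := by
      rw [hgd]
      have := @norm_add_sq ℂ _ _ _ _ hval (b • (u + I • R u))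
      simpa only [RCLike.re_to_complex] using this
    rw [hn1, hn2, hcross2, norm_smul, norm_smul]
    linear_combination (‖b‖^2 : ℝ) * hq
  refine ⟨⟨⟨hval, memh⟩, b⟩, ⟨E1, E2, E3⟩, ?_⟩
  rintro ⟨h', b'⟩ ⟨he1, he2, he3⟩
  have hdec : (h':H) + b' • (A ⟨R u, hmem u⟩ : H) = hval + b • (A ⟨R u, hmem u⟩ : H) := by
    rw [← he1, E1]
  have hbb : b' = b := by
    by_contra hne
    apply unotmem
    have key : (b' - b) • (A ⟨R u, hmem u⟩ : H) = hval - (h':H) := by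
      linear_combination (norm := module) hdec
    have karu : (A ⟨R u, hmem u⟩ : H) = (b' - b)⁻¹ • (hval - (h':H)) := by
      rw [← key, smul_smul, inv_mul_cancel₀ (sub_ne_zero.mpr hne), one_smul]
    have hu_eq2 : u = (b' - b)⁻¹ • (hval - (h':H)) - I • R u := by
      rw [← karu]; exact hu_eq
    rw [hu_eq2]
    exact Submodule.sub_mem _ (Submodule.smul_mem _ _ (Submodule.sub_mem _ memh h'.2))
      (Submodule.smul_mem _ _ (hmem u))
  have hhh : h' = ⟨hval, memh⟩ := by
    apply Subtype.ext
    have h5 := hdec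
    rw [hbb] at h5
    exact add_right_cancel h5
  exact Prod.ext hhh hbb
end
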